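/- For constants c > 0, positive integer N, and k, γ̄ > 0, ∫₀^∞ c x^{N-1} Q(√(k x γ̄)) dx = c · (2N-1)!! / (2 N (k γ̄)^N). -/

import Mathlib

open MeasureTheory Real

noncomputable def gaussQ (z : ℝ) : ℝ :=
  (Real.sqrt (2 * π))⁻¹ * ∫ v in Set.Ioi z, Real.exp (-v ^ 2 / 2)

lemma gauss_fun_eq : (fun v : ℝ => Real.exp (-v ^ 2 / 2)) = fun v => Real.exp (-(1/2) * v ^ 2) := by
  funext v; ring_nf

lemma gauss_integrable : Integrable (fun v : ℝ => Real.exp (-v ^ 2 / 2)) := by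
  rw [gauss_fun_eq]; exact integrable_exp_neg_mul_sq (by norm_num)

lemma gauss4_integrable : Integrable (fun v : ℝ => Real.exp (-v ^ 2 / 4)) := by
  have : (fun v : ℝ => Real.exp (-v ^ 2 / 4)) = fun v => Real.exp (-(1/4) * v ^ 2) := by
    funext v; ring_nf
  rw [this]; exact integrable_exp_neg_mul_sq (by norm_num)

lemma gaussQ_eq (z : ℝ) :
    gaussQ z = gaussQ 0 - (Real.sqrt (2 * π))⁻¹ * ∫ v in (0:ℝ)..z, Real.exp (-v ^ 2 / 2) := by
  have h1 := intervalIntegral.integral_Iic_add_Ioi (gauss_integrable.integrableOn (s := Set.Iic z))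
    (gauss_integrable.integrableOn (s := Set.Ioi z))
  have h2 := intervalIntegral.integral_Iic_add_Ioi (gauss_integrable.integrableOn (s := Set.Iic 0))
    (gauss_integrable.integrableOn (s := Set.Ioi 0))
  have h3 := intervalIntegral.integral_Iic_sub_Iic (f := fun v : ℝ => Real.exp (-v ^ 2 / 2))
    (μ := volume) (gauss_integrable.integrableOn) (gauss_integrable.integrableOn) (a := 0) (b := z)
  unfold gaussQ
  rw [← mul_sub]
  congr 1
  linarith [h1, h2, h3]

lemma gaussQ_hasDerivAt (z : ℝ) :
    HasDerivAt gaussQ (-((Real.sqrt (2 * π))⁻¹ * Real.exp (-z ^ 2 / 2))) z := by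
  have hc : Continuous fun v : ℝ => Real.exp (-v ^ 2 / 2) := by fun_prop
  have h1 : HasDerivAt (fun t => ∫ v in (0:ℝ)..t, Real.exp (-v ^ 2 / 2))
      (Real.exp (-z ^ 2 / 2)) z :=
    intervalIntegral.integral_hasDerivAt_right (gauss_integrable.intervalIntegrable)
      (hc.stronglyMeasurableAtFilter _ _) hc.continuousAt
  have h2 := ((h1.const_mul ((Real.sqrt (2 * π))⁻¹)).const_sub (gaussQ 0))
  have : gaussQ = fun t => gaussQ 0 - (Real.sqrt (2 * π))⁻¹ * ∫ v in (0:ℝ)..t,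
      Real.exp (-v ^ 2 / 2) := funext gaussQ_eq
  rw [this]
  exact h2

lemma gaussQ_nonneg (z : ℝ) : 0 ≤ gaussQ z := by
  unfold gaussQ
  apply mul_nonneg (by positivity)
  apply MeasureTheory.integral_nonneg
  intro v; positivity

lemma gaussQ_le (z : ℝ) (hz : 0 ≤ z) :
    gaussQ z ≤ ((Real.sqrt (2 * π))⁻¹ * ∫ v : ℝ, Real.exp (-v ^ 2 / 4)) * Real.exp (-z ^ 2 / 4) := by
  unfold gaussQ
  rw [mul_assoc, mul_comm (∫ v : ℝ, Real.exp (-v ^ 2 / 4)) (Real.exp (-z ^ 2 / 4))]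
  apply mul_le_mul_of_nonneg_left _ (by positivity)
  calc ∫ v in Set.Ioi z, Real.exp (-v ^ 2 / 2)
      ≤ ∫ v in Set.Ioi z, Real.exp (-z ^ 2 / 4) * Real.exp (-v ^ 2 / 4) := by
        apply MeasureTheory.setIntegral_mono_on gauss_integrable.integrableOn
          ((gauss4_integrable.const_mul _).integrableOn) measurableSet_Ioi
        intro v hv
        rw [← Real.exp_add]
        apply Real.exp_le_exp.mpr
        have hv' : z ≤ v := le_of_lt hv
        nlinarith [sq_nonneg (v - z), sq_nonneg (v + z)]
    _ = Real.exp (-z ^ 2 / 4) * ∫ v in Set.Ioi z, Real.exp (-v ^ 2 / 4) := by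
        rw [MeasureTheory.integral_const_mul]
    _ ≤ Real.exp (-z ^ 2 / 4) * ∫ v : ℝ, Real.exp (-v ^ 2 / 4) := by
        apply mul_le_mul_of_nonneg_left _ (by positivity)
        apply MeasureTheory.setIntegral_le_integral gauss4_integrable
        filter_upwards with v; positivity

lemma gammaHalf (n : ℕ) :
    Real.Gamma ((n : ℝ) + 1/2) = (Nat.doubleFactorial (2*n - 1) : ℝ) / 2 ^ n * Real.sqrt π := by
  induction n with
  | zero => norm_num [Real.Gamma_one_half_eq, Nat.doubleFactorial]
  | succ n ih =>
    have h1 : ((n + 1 : ℕ) : ℝ) + 1/2 = ((n : ℝ) + 1/2) + 1 := by push_cast; ring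
    rw [h1, Real.Gamma_add_one (by positivity), ih]
    have h2 : 2 * (n + 1) - 1 = 2*n + 1 := by omega
    have h3 : (2*n + 1).doubleFactorial = (2*n + 1) * (2*n - 1).doubleFactorial := by
      have := Nat.doubleFactorial_add_one (2*n)
      simpa using this
    rw [h2, h3]
    push_cast
    field_simp
    ring

lemma gaussQ_continuous : Continuous gaussQ :=
  continuous_iff_continuousAt.mpr fun x => (gaussQ_hasDerivAt x).continuousAt

theorem stmt_7 (c : ℝ) (hc : 0 < c) (N : ℕ) (hN : 0 < N)
    (k γ : ℝ) (hk : 0 < k) (hγ : 0 < γ) :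
    ∫ x in Set.Ioi (0 : ℝ), c * x ^ (N - 1) * gaussQ (Real.sqrt (k * x * γ))
      = c * (Nat.doubleFactorial (2 * N - 1) : ℝ) / (2 * N * (k * γ) ^ N) := by
  have hπ : (0:ℝ) < π := Real.pi_pos
  set a : ℝ := k * γ with ha_def
  have ha : 0 < a := mul_pos hk hγ
  have hNR : (0:ℝ) < (N:ℝ) := by exact_mod_cast hN
  set c0 : ℝ := (Real.sqrt (2 * π))⁻¹ with hc0_def
  set u : ℝ → ℝ := fun x => gaussQ (Real.sqrt (a * x)) with hu_def
  set v : ℝ → ℝ := fun x => x ^ N / N with hv_def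
  set u' : ℝ → ℝ := fun x => -(c0 * Real.exp (-(a*x)/2) * (a / (2 * Real.sqrt (a*x)))) with hu'_def
  set v' : ℝ → ℝ := fun x => x ^ (N - 1) with hv'_def
  -- derivative hypotheses
  have hu : ∀ x ∈ Set.Ioi (0:ℝ), HasDerivAt u (u' x) x := by
    intro x hx
    have hx0 : 0 < x := hx
    have hax : 0 < a * x := mul_pos ha hx0
    have hmul : HasDerivAt (fun y : ℝ => a * y) a x := by
      simpa using (hasDerivAt_id x).const_mul a
    have hs : HasDerivAt (fun y : ℝ => Real.sqrt (a * y)) (1 / (2 * Real.sqrt (a*x)) * a) x :=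
      (Real.hasDerivAt_sqrt hax.ne').comp x hmul
    have hQ := (gaussQ_hasDerivAt (Real.sqrt (a*x))).comp x hs
    have hsq : Real.sqrt (a*x) ^ 2 = a * x := Real.sq_sqrt hax.le
    convert hQ using 1
    · rfl
    · rfl
    · rfl
    rw [hsq]
    simp only [hu'_def]
    ring
  have hv : ∀ x ∈ Set.Ioi (0:ℝ), HasDerivAt v (v' x) x := by
    intro x _
    have := (hasDerivAt_pow N x).div_const (N : ℝ)
    simpa [hv_def, hv'_def, mul_div_assoc, mul_div_cancel_left₀ _ hNR.ne'] using this
  -- continuity of u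
  have hu_cont : Continuous u :=
    gaussQ_continuous.comp (Real.continuous_sqrt.comp (continuous_const.mul continuous_id))
  -- pointwise bound for u on nonneg reals
  set K : ℝ := c0 * ∫ w : ℝ, Real.exp (-w ^ 2 / 4) with hK_def
  have hK : 0 ≤ K := by
    apply mul_nonneg (by positivity)
    apply MeasureTheory.integral_nonneg; intro w; positivity
  have hubound : ∀ x : ℝ, 0 ≤ x → u x ≤ K * Real.exp (-(a/4) * x) := by
    intro x hx0
    have := gaussQ_le (Real.sqrt (a*x)) (Real.sqrt_nonneg _)
    have hsq : Real.sqrt (a*x) ^ 2 = a * x := Real.sq_sqrt (by positivity)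
    rw [hsq] at this
    convert this using 3
    ring
  have hu_nonneg : ∀ x : ℝ, 0 ≤ u x := fun x => gaussQ_nonneg _
  -- integrability of u * v'
  have hNcast : ((N - 1 : ℕ) : ℝ) = (N : ℝ) - 1 := by
    rw [Nat.cast_sub hN, Nat.cast_one]
  have huv' : MeasureTheory.IntegrableOn (u * v') (Set.Ioi 0) := by
    have hbase : MeasureTheory.IntegrableOn
        (fun x : ℝ => x ^ ((N:ℝ) - 1) * Real.exp (-(a/4) * x ^ (1:ℝ))) (Set.Ioi 0) :=
      integrableOn_rpow_mul_exp_neg_mul_rpow (by have := hNR; linarith) one_pos (by positivity)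
    have hg : MeasureTheory.IntegrableOn
        (fun x : ℝ => K * (x ^ ((N:ℝ) - 1) * Real.exp (-(a/4) * x ^ (1:ℝ)))) (Set.Ioi 0) :=
      hbase.const_mul K
    apply MeasureTheory.Integrable.mono' hg
    · exact ((hu_cont.mul (continuous_pow (N-1))).aestronglyMeasurable).restrict
    · filter_upwards [MeasureTheory.ae_restrict_mem measurableSet_Ioi] with x hx
      have hx0 : (0:ℝ) < x := hx
      have h1 : (u * v') x = u x * x ^ (N - 1) := rfl
      rw [h1, Real.rpow_one, ← Real.rpow_natCast x (N-1), hNcast]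
      rw [Real.norm_eq_abs, abs_of_nonneg (mul_nonneg (hu_nonneg x) (by positivity))]
      calc u x * x ^ ((N:ℝ) - 1) ≤ (K * Real.exp (-(a/4) * x)) * x ^ ((N:ℝ) - 1) :=
            mul_le_mul_of_nonneg_right (hubound x hx0.le) (by positivity)
        _ = K * (x ^ ((N:ℝ) - 1) * Real.exp (-(a/4) * x)) := by ring
  -- equality for u' * v on Ioi 0
  have hequv : Set.EqOn (u' * v)
      (fun x : ℝ => (-(c0 * a / (2 * Real.sqrt a * N))) *
        (x ^ ((N:ℝ) - 1/2) * Real.exp (-(a/2) * x ^ (1:ℝ)))) (Set.Ioi 0) := by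
    intro x hx
    have hx0 : (0:ℝ) < x := hx
    have hsa : Real.sqrt (a*x) = Real.sqrt a * Real.sqrt x := Real.sqrt_mul ha.le x
    have hxr : x ^ ((N:ℝ) - 1/2) = x ^ N / Real.sqrt x := by
      rw [Real.rpow_sub hx0, Real.rpow_natCast, ← Real.sqrt_eq_rpow]
    have h1 : (u' * v) x = -(c0 * Real.exp (-(a*x)/2) * (a / (2 * Real.sqrt (a*x)))) * (x ^ N / N) := rfl
    beta_reduce
    rw [h1, Real.rpow_one, hxr, hsa]
    have hsa0 : Real.sqrt a ≠ 0 := by positivity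
    have hsx0 : Real.sqrt x ≠ 0 := by positivity
    have hexp : Real.exp (-(a*x)/2) = Real.exp (-(a/2) * x) := by ring_nf
    rw [hexp]
    field_simp
  have hbase2 : MeasureTheory.IntegrableOn
      (fun x : ℝ => x ^ ((N:ℝ) - 1/2) * Real.exp (-(a/2) * x ^ (1:ℝ))) (Set.Ioi 0) :=
    integrableOn_rpow_mul_exp_neg_mul_rpow (by have := hNR; linarith) one_pos (by positivity)
  have hu'v : MeasureTheory.IntegrableOn (u' * v) (Set.Ioi 0) := by
    have h' : MeasureTheory.IntegrableOn
        (fun x : ℝ => (-(c0 * a / (2 * Real.sqrt a * (N:ℝ)))) *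
          (x ^ ((N:ℝ) - 1/2) * Real.exp (-(a/2) * x ^ (1:ℝ)))) (Set.Ioi (0:ℝ)) :=
      hbase2.const_mul _
    exact h'.congr_fun (fun x hx => (hequv hx).symm) measurableSet_Ioi
  -- boundary limits
  have h_zero : Filter.Tendsto (u * v) (nhdsWithin 0 (Set.Ioi 0)) (nhds 0) := by
    have hcv : Continuous v := by
      apply Continuous.div_const; exact continuous_pow N
    have h : Filter.Tendsto (fun x => u x * v x) (nhdsWithin 0 (Set.Ioi 0)) (nhds (u 0 * v 0)) :=
      ((hu_cont.mul hcv).tendsto 0).mono_left nhdsWithin_le_nhds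
    have h0 : u 0 * v 0 = 0 := by
      simp [hv_def, zero_pow hN.ne']
    rw [h0] at h
    exact h
  have h_infty : Filter.Tendsto (u * v) Filter.atTop (nhds 0) := by
    have hg : Filter.Tendsto (fun x : ℝ => (K / N) * (x ^ ((N:ℝ)) * Real.exp (-(a/4) * x)))
        Filter.atTop (nhds 0) := by
      have := (tendsto_rpow_mul_exp_neg_mul_atTop_nhds_zero ((N:ℝ)) (a/4) (by positivity)).const_mul (K / N)
      simpa using this
    apply squeeze_zero' ?_ ?_ hg
    · filter_upwards [Filter.eventually_ge_atTop (0:ℝ)] with x hx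
      exact mul_nonneg (hu_nonneg x) (by positivity)
    · filter_upwards [Filter.eventually_ge_atTop (0:ℝ)] with x hx
      have h1 : (u * v) x = u x * (x ^ N / N) := rfl
      rw [h1]
      calc u x * (x ^ N / N) ≤ (K * Real.exp (-(a/4) * x)) * (x ^ N / N) :=
            mul_le_mul_of_nonneg_right (hubound x hx) (by positivity)
        _ = (K / N) * (x ^ ((N:ℝ)) * Real.exp (-(a/4) * x)) := by
            rw [Real.rpow_natCast]; ring
  -- integration by parts
  have key := MeasureTheory.integral_Ioi_mul_deriv_eq_deriv_mul hu hv huv' hu'v h_zero h_infty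
  -- value of the remaining integral
  have hgammaInt : ∫ x in Set.Ioi (0:ℝ), u' x * v x
      = -(c0 * a / (2 * Real.sqrt a * N)) *
        ((a/2) ^ (-(((N:ℝ) - 1/2) + 1)/1) * (1/1) * Real.Gamma ((((N:ℝ) - 1/2) + 1)/1)) := by
    rw [show (∫ x in Set.Ioi (0:ℝ), u' x * v x) = ∫ x in Set.Ioi (0:ℝ), (u' * v) x from rfl]
    rw [MeasureTheory.setIntegral_congr_fun measurableSet_Ioi hequv,
      MeasureTheory.integral_const_mul,
      integral_rpow_mul_exp_neg_mul_rpow one_pos (by have := hNR; linarith) (by positivity)]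
  -- rewrite the goal integrand
  have hgoal_eq : ∀ x : ℝ, c * x ^ (N - 1) * gaussQ (Real.sqrt (k * x * γ))
      = c * (u x * v' x) := by
    intro x
    rw [show k * x * γ = a * x by rw [ha_def]; ring]
    show _ = c * (gaussQ (Real.sqrt (a * x)) * x ^ (N-1))
    ring
  simp_rw [hgoal_eq]
  rw [MeasureTheory.integral_const_mul, key, hgammaInt]
  rw [show (-((N:ℝ) - 1/2 + 1)/1 : ℝ) = -((N:ℝ) + 1/2) by ring,
    show ((((N:ℝ) - 1/2) + 1)/1 : ℝ) = (N:ℝ) + 1/2 by ring, gammaHalf N]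
  have hrp : (a/2 : ℝ) ^ (-((N:ℝ) + 1/2)) = (2:ℝ)^N * Real.sqrt 2 / (a^N * Real.sqrt a) := by
    rw [Real.rpow_neg (by positivity), Real.rpow_add (by positivity : (0:ℝ) < a/2),
      Real.rpow_natCast, ← Real.sqrt_eq_rpow, div_pow, Real.sqrt_div ha.le]
    rw [show (a^N / 2^N * (Real.sqrt a / Real.sqrt 2) : ℝ)
        = (a^N * Real.sqrt a) / (2^N * Real.sqrt 2) by ring]
    rw [inv_div]
  rw [hrp]
  have hs2π : Real.sqrt (2*π) = Real.sqrt 2 * Real.sqrt π := Real.sqrt_mul (by norm_num) π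
  have haa : Real.sqrt a * Real.sqrt a = a := Real.mul_self_sqrt ha.le
  have h22 : Real.sqrt 2 * Real.sqrt 2 = 2 := Real.mul_self_sqrt (by norm_num)
  have hsπ : Real.sqrt π ≠ 0 := by positivity
  have hsa : Real.sqrt a ≠ 0 := by positivity
  have hs2 : Real.sqrt 2 ≠ 0 := by positivity
  rw [hc0_def, hs2π]
  have hNne : (N:ℝ) ≠ 0 := hNR.ne'
  have hane : a ≠ 0 := ha.ne'
  field_simp
  ring_nf
  rw [show Real.sqrt (k*γ) ^ 2 = k*γ from Real.sq_sqrt (by positivity)]
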